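/- arXiv:2507.19400 — 2 statements merged into one kernel-verified Lean document; each statement's English description precedes it below -/
import Mathlib

section
/- For 0 \le i \le j \le d one has F_i E^*_j = \mathcal{L}^{j-i} F_j E^*_j / ((\theta^*_j-\theta^*_i)(\theta^*_j-\theta^*_{i+1})\cdots(\theta^*_j-\theta^*_{j-1})). -/
/-!
Compute `F_i 𝓛 E*_j` in two ways. Since `A*` acts as `θ*_j` on the right of `E*_j` and
`∑ θ*_k F_k` acts as `θ*_i` on the left of `F_i`, it equals `(θ*_j - θ*_i) F_i E*_j`; since
`F_i 𝓛 = 𝓛 F_{i+1}`, it also equals `𝓛 F_{i+1} E*_j`. Chaining these relations from `i` up to `j`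
gives the formula.
-/

open Finset

section OrthogonalFamily

variable {R A : Type*} [CommSemiring R] [Semiring A] [Algebra R A] {d j : ℕ} {E : ℕ → A}

theorem sum_smul_mul_of_orthogonal (θ : ℕ → R)
    (hE : ∀ k ≤ d, E k * E j = if k = j then E k else 0) (hj : j ≤ d) :
    (∑ k ∈ range (d + 1), θ k • E k) * E j = θ j • E j := by
  rw [sum_mul, sum_eq_single_of_mem j (mem_range.2 (Nat.lt_succ_of_le hj))]
  · rw [smul_mul_assoc, hE j hj, if_pos rfl]
  · intro k hk hkj
    rw [smul_mul_assoc, hE k (Nat.le_of_lt_succ (mem_range.1 hk)), if_neg hkj, smul_zero]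

theorem mul_sum_smul_of_orthogonal (θ : ℕ → R)
    (hE : ∀ k ≤ d, E j * E k = if j = k then E j else 0) (hj : j ≤ d) :
    E j * (∑ k ∈ range (d + 1), θ k • E k) = θ j • E j := by
  rw [mul_sum, sum_eq_single_of_mem j (mem_range.2 (Nat.lt_succ_of_le hj))]
  · rw [mul_smul_comm, hE j hj, if_pos rfl]
  · intro k hk hkj
    rw [mul_smul_comm, hE k (Nat.le_of_lt_succ (mem_range.1 hk)), if_neg (Ne.symm hkj), smul_zero]

end OrthogonalFamily

theorem prod_smul_eq_pow_mul {R A : Type*} [CommSemiring R] [Semiring A] [Algebra R A]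
    (L : A) (x : ℕ → A) (c : ℕ → R) {i j : ℕ} (hij : i ≤ j)
    (hx : ∀ k ∈ Ico i j, c k • x k = L * x (k + 1)) :
    (∏ k ∈ Ico i j, c k) • x i = L ^ (j - i) * x j := by
  induction j, hij using Nat.le_induction with
  | base => simp
  | succ j hij ih =>
    have hj : j ∈ Ico i (j + 1) := mem_Ico.2 ⟨hij, j.lt_succ_self⟩
    calc (∏ k ∈ Ico i (j + 1), c k) • x i
        = c j • (∏ k ∈ Ico i j, c k) • x i := by
          rw [prod_Ico_succ_top hij, mul_comm, mul_smul]
      _ = L ^ (j - i) * (c j • x j) := by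
          rw [ih fun k hk => hx k (Ico_subset_Ico_right j.le_succ hk), mul_smul_comm]
      _ = L ^ (j + 1 - i) * x (j + 1) := by
          rw [hx j hj, ← mul_assoc, ← pow_succ, Nat.sub_add_comm hij]

theorem sub_smul_mul_eq_mul_mul_of_mul_eq_mul {R A : Type*} [CommRing R] [Ring A] [Algebra R A]
    {a b : R} {X Y L f f' e : A} (hL : L = X - Y) (hX : X * e = a • e) (hY : f * Y = b • f)
    (hfL : f * L = L * f') :
    (a - b) • (f * e) = L * (f' * e) := by
  rw [← mul_assoc, ← hfL, hL, mul_sub, sub_mul, hY, mul_assoc, hX, mul_smul_comm,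
    smul_mul_assoc, sub_smul]

theorem stmt3_general {F V : Type*} [Field F] [AddCommGroup V] [Module F V]
    (d : ℕ)
    (As : Module.End F V) (Es Fi : ℕ → Module.End F V) (θs : ℕ → F)
    (hEsEs : ∀ i ≤ d, ∀ j ≤ d, Es i * Es j = if i = j then Es i else 0)
    (hAs : As = ∑ i ∈ Finset.range (d + 1), θs i • Es i)
    (hdist : ∀ i ≤ d, ∀ j ≤ d, i ≠ j → θs i ≠ θs j)
    (hFF : ∀ i ≤ d, ∀ j ≤ d, Fi i * Fi j = if i = j then Fi i else 0)
    (L : Module.End F V)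
    (hL : L = As - ∑ i ∈ Finset.range (d + 1), θs i • Fi i)
    (hFL : ∀ i, 1 ≤ i → i ≤ d → Fi (i - 1) * L = L * Fi i) :
    ∀ i j, i ≤ j → j ≤ d →
      Fi i * Es j =
        (∏ k ∈ Finset.Ico i j, (θs j - θs k))⁻¹ • (L ^ (j - i) * (Fi j * Es j)) := by
  intro i j hij hjd
  have hAE : As * Es j = θs j • Es j :=
    hAs ▸ sum_smul_mul_of_orthogonal θs (fun k hk => hEsEs k hk j hjd) hjd
  have hstep : ∀ k ∈ Ico i j, (θs j - θs k) • (Fi k * Es j) = L * (Fi (k + 1) * Es j) := by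
    intro k hk
    have hkj := (mem_Ico.1 hk).2
    exact sub_smul_mul_eq_mul_mul_of_mul_eq_mul hL hAE
      (mul_sum_smul_of_orthogonal θs (hFF k (by omega)) (by omega))
      (by simpa using hFL (k + 1) (by omega) (by omega))
  have hprod : ∏ k ∈ Ico i j, (θs j - θs k) ≠ 0 :=
    prod_ne_zero_iff.2 fun k hk =>
      sub_ne_zero.2 (hdist j hjd k (by grind) (by grind))
  rw [← prod_smul_eq_pow_mul L _ _ hij hstep, inv_smul_smul₀ hprod]

/-- For `0 ≤ i ≤ j ≤ d`,
`F_i E*_j = 𝓛^{j-i} F_j E*_j / ((θ*_j-θ*_i)(θ*_j-θ*_{i+1})⋯(θ*_j-θ*_{j-1}))`. -/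
theorem stmt3 {F V : Type*} [Field F] [AddCommGroup V] [Module F V]
    [FiniteDimensional F V] (d : ℕ) (hd : 1 ≤ d)
    (As : Module.End F V) (Es Fi : ℕ → Module.End F V) (θs : ℕ → F)
    (hEsEs : ∀ i ≤ d, ∀ j ≤ d, Es i * Es j = if i = j then Es i else 0)
    (hEssum : ∑ i ∈ Finset.range (d + 1), Es i = 1)
    (hAs : As = ∑ i ∈ Finset.range (d + 1), θs i • Es i)
    (hdist : ∀ i ≤ d, ∀ j ≤ d, i ≠ j → θs i ≠ θs j)
    (hFF : ∀ i ≤ d, ∀ j ≤ d, Fi i * Fi j = if i = j then Fi i else 0)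
    (hFsum : ∑ i ∈ Finset.range (d + 1), Fi i = 1)
    (L : Module.End F V)
    (hL : L = As - ∑ i ∈ Finset.range (d + 1), θs i • Fi i)
    (hFL : ∀ i, 1 ≤ i → i ≤ d → Fi (i - 1) * L = L * Fi i)
    (hL0 : L * Fi 0 = 0) :
    ∀ i j, i ≤ j → j ≤ d →
      Fi i * Es j =
        (∏ k ∈ Finset.Ico i j, (θs j - θs k))⁻¹ • (L ^ (j - i) * (Fi j * Es j)) :=
  stmt3_general d As Es Fi θs hEsEs hAs hdist hFF L hL hFL
end

section
/- For 0 \le i \le j \le d one has E^*_i F_j = E^*_i F_i \mathcal{L}^{j-i} / ((\theta^*_i-\theta^*_j)(\theta^*_i-\theta^*_{j-1})\cdots(\theta^*_i-\theta^*_{i+1})). -/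
/-!
Multiplying `𝓛 = A* - ∑ θ*_k F_k` by `E*_i` on the left and by `F_j` on the right gives
`E*_i 𝓛 F_j = (θ*_i - θ*_j) E*_i F_j`, because `E*_i A* = θ*_i E*_i` and `(∑ θ*_k F_k) F_j = θ*_j F_j`.
Since `𝓛 F_{j+1} = F_j 𝓛`, the left side is `E*_i F_j 𝓛`, so each step from `j` to `j + 1`
divides by `θ*_i - θ*_{j+1}` and multiplies by `𝓛`; iterating from `j = i` gives the formula.
-/

open Finset

section OrthogonalIdempotents

variable {ι R A : Type*} [DecidableEq ι] [CommSemiring R] [Semiring A] [Algebra R A]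
  {s : Finset ι} {e : ι → A}

theorem mul_sum_smul_of_orthogonal_s4
    (he : ∀ i ∈ s, ∀ j ∈ s, e i * e j = if i = j then e i else 0)
    (c : ι → R) {i : ι} (hi : i ∈ s) :
    e i * ∑ k ∈ s, c k • e k = c i • e i := by
  rw [mul_sum, sum_eq_single_of_mem i hi]
  · rw [mul_smul_comm, he i hi i hi, if_pos rfl]
  · intro k hk hki
    rw [mul_smul_comm, he i hi k hk, if_neg (Ne.symm hki), smul_zero]

theorem sum_smul_mul_of_orthogonal_s4
    (he : ∀ i ∈ s, ∀ j ∈ s, e i * e j = if i = j then e i else 0)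
    (c : ι → R) {j : ι} (hj : j ∈ s) :
    (∑ k ∈ s, c k • e k) * e j = c j • e j := by
  rw [sum_mul, sum_eq_single_of_mem j hj]
  · rw [smul_mul_assoc, he j hj j hj, if_pos rfl]
  · intro k hk hkj
    rw [smul_mul_assoc, he k hk j hj, if_neg hkj, smul_zero]

end OrthogonalIdempotents

theorem eq_prod_inv_smul_mul_pow_of_smul_succ {K A : Type*} [Field K] [Semiring A] [Algebra K A]
    (x : ℕ → A) (c : ℕ → K) (L : A) {i n : ℕ} (hc : ∀ k, i < k → k ≤ n → c k ≠ 0)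
    (hrec : ∀ k, i ≤ k → k < n → c (k + 1) • x (k + 1) = x k * L) :
    ∀ j, i ≤ j → j ≤ n → x j = (∏ k ∈ Ioc i j, c k)⁻¹ • (x i * L ^ (j - i)) := by
  intro j hij hjn
  induction j, hij using Nat.le_induction with
  | base => simp
  | succ j hij ih =>
    have hstep : x (j + 1) = (c (j + 1))⁻¹ • (x j * L) := by
      rw [← hrec j hij hjn, smul_smul, inv_mul_cancel₀ (hc (j + 1) (by omega) hjn), one_smul]
    rw [hstep, ih (by omega), prod_Ioc_succ_top hij, smul_mul_assoc, smul_smul, mul_assoc,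
      ← pow_succ, mul_inv, mul_comm (c (j + 1))⁻¹, Nat.sub_add_comm hij]

theorem stmt4_general {F V : Type*} [Field F] [AddCommGroup V] [Module F V]
    (d : ℕ)
    (As : Module.End F V) (Es Fi : ℕ → Module.End F V) (θs : ℕ → F)
    (hEsEs : ∀ i ≤ d, ∀ j ≤ d, Es i * Es j = if i = j then Es i else 0)
    (hAs : As = ∑ i ∈ Finset.range (d + 1), θs i • Es i)
    (hdist : ∀ i ≤ d, ∀ j ≤ d, i ≠ j → θs i ≠ θs j)
    (hFF : ∀ i ≤ d, ∀ j ≤ d, Fi i * Fi j = if i = j then Fi i else 0)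
    (L : Module.End F V)
    (hL : L = As - ∑ i ∈ Finset.range (d + 1), θs i • Fi i)
    (hFL : ∀ i, 1 ≤ i → i ≤ d → Fi (i - 1) * L = L * Fi i) :
    ∀ i j, i ≤ j → j ≤ d →
      Es i * Fi j =
        (∏ k ∈ Finset.Ioc i j, (θs i - θs k))⁻¹ • (Es i * Fi i * L ^ (j - i)) := by
  simp only [← mem_range_succ_iff] at hEsEs hFF
  have hELF : ∀ i ≤ d, ∀ j ≤ d, Es i * L * Fi j = (θs i - θs j) • (Es i * Fi j) := by
    intro i hi j hj
    rw [hL, hAs, mul_sub, sub_mul, mul_sum_smul_of_orthogonal_s4 hEsEs θs (mem_range_succ_iff.2 hi),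
      mul_assoc, sum_smul_mul_of_orthogonal_s4 hFF θs (mem_range_succ_iff.2 hj), sub_smul,
      smul_mul_assoc, mul_smul_comm]
  intro i j hij hjd
  refine eq_prod_inv_smul_mul_pow_of_smul_succ (fun j ↦ Es i * Fi j) _ L
    (fun k hik hkd ↦ sub_ne_zero.2 (hdist i (by omega) k hkd (by omega))) ?_ j hij hjd
  intro k hik hkd
  rw [← hELF i (by omega) (k + 1) hkd, mul_assoc, mul_assoc, ← hFL (k + 1) (by omega) hkd,
    Nat.add_sub_cancel]

/-- For `0 ≤ i ≤ j ≤ d`,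
`E*_i F_j = E*_i F_i 𝓛^{j-i} / ((θ*_i-θ*_j)(θ*_i-θ*_{j-1})⋯(θ*_i-θ*_{i+1}))`. -/
theorem stmt4 {F V : Type*} [Field F] [AddCommGroup V] [Module F V]
    [FiniteDimensional F V] (d : ℕ) (hd : 1 ≤ d)
    (As : Module.End F V) (Es Fi : ℕ → Module.End F V) (θs : ℕ → F)
    (hEsEs : ∀ i ≤ d, ∀ j ≤ d, Es i * Es j = if i = j then Es i else 0)
    (hEssum : ∑ i ∈ Finset.range (d + 1), Es i = 1)
    (hAs : As = ∑ i ∈ Finset.range (d + 1), θs i • Es i)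
    (hdist : ∀ i ≤ d, ∀ j ≤ d, i ≠ j → θs i ≠ θs j)
    (hFF : ∀ i ≤ d, ∀ j ≤ d, Fi i * Fi j = if i = j then Fi i else 0)
    (hFsum : ∑ i ∈ Finset.range (d + 1), Fi i = 1)
    (L : Module.End F V)
    (hL : L = As - ∑ i ∈ Finset.range (d + 1), θs i • Fi i)
    (hFL : ∀ i, 1 ≤ i → i ≤ d → Fi (i - 1) * L = L * Fi i)
    (hL0 : L * Fi 0 = 0) :
    ∀ i j, i ≤ j → j ≤ d →
      Es i * Fi j =
        (∏ k ∈ Finset.Ioc i j, (θs i - θs k))⁻¹ • (Es i * Fi i * L ^ (j - i)) :=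
  stmt4_general d As Es Fi θs hEsEs hAs hdist hFF L hL hFL
end
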